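/- arXiv:math/0301076 — 8 statements merged into one kernel-verified Lean document; each statement's English description precedes it below -/
import Mathlib

section
/- Let E : ℕ → ℝ satisfy E(0) = 0, E(1) = 1, and for every j ≥ 1: E(2j) = E(2j−1) + 1 and E(2j+1) = (E(2j) + E(2j−2))/2 + 1. Then for every j ≥ 0 one has E(2j) + 2·E(2j+1) = 4j + 2. -/
open Finset

theorem dual_cyclic_recurrence
    (E : ℕ → ℝ) (h0 : E 0 = 0) (h1 : E 1 = 1)
    (heven : ∀ j : ℕ, 1 ≤ j → E (2 * j) = E (2 * j - 1) + 1)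
    (hodd : ∀ j : ℕ, 1 ≤ j → E (2 * j + 1) = (E (2 * j) + E (2 * j - 2)) / 2 + 1) :
    ∀ j : ℕ, E (2 * j) + 2 * E (2 * j + 1) = 4 * (j : ℝ) + 2 := by
  intro j
  induction j with
  | zero => simp [h0, h1]
  | succ n ih =>
    have he := heven (n + 1) (by omega)
    have ho := hodd (n + 1) (by omega)
    have hs1 : 2 * (n + 1) - 1 = 2 * n + 1 := by omega
    have hs2 : 2 * (n + 1) - 2 = 2 * n := by omega
    rw [hs1] at he
    rw [hs2] at ho
    push_cast
    rw [ho, he]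
    push_cast at ih
    linarith
end

section
/- Let E : ℕ → ℝ satisfy E(0) = 0, E(1) = 1, and for every j ≥ 1: E(2j) = E(2j−1) + 1 and E(2j+1) = (E(2j) + E(2j−2))/2 + 1. Then for every integer n ≥ 4, max{E(2n−8), E(2n−7)} ≥ (4/3)·n − 14/3. -/
open Finset

theorem dual_cyclic_lower_bound
    (E : ℕ → ℝ) (h0 : E 0 = 0) (h1 : E 1 = 1)
    (heven : ∀ j : ℕ, 1 ≤ j → E (2 * j) = E (2 * j - 1) + 1)
    (hodd : ∀ j : ℕ, 1 ≤ j → E (2 * j + 1) = (E (2 * j) + E (2 * j - 2)) / 2 + 1) :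
    ∀ n : ℕ, 4 ≤ n → max (E (2 * n - 8)) (E (2 * n - 7)) ≥ (4 / 3) * (n : ℝ) - 14 / 3 := by
  have key : ∀ j : ℕ, E (2*j+1) ≥ (4/3) * j + 2/3 ∧
      E (2*(j+1)+1) ≥ (4/3) * (j+1 : ℕ) + 2/3 := by
    intro j
    induction j with
    | zero =>
      have h2 : E 2 = 2 := by
        have := heven 1 le_rfl; norm_num at this; linarith
      have h3 : E 3 = 2 := by
        have := hodd 1 le_rfl; norm_num at this; linarith
      constructor
      · norm_num [h1]
      · norm_num [h3]
    | succ j ih =>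
      obtain ⟨hj, hj1⟩ := ih
      refine ⟨hj1, ?_⟩
      have e1 := hodd (j+2) (by omega)
      have e2 := heven (j+2) (by omega)
      have e3 := heven (j+1) (by omega)
      have r1 : 2*(j+2) = 2*j+4 := by omega
      have r2 : 2*(j+2) - 1 = 2*j+3 := by omega
      have r3 : 2*(j+2) - 2 = 2*j+2 := by omega
      have r4 : 2*(j+1) = 2*j+2 := by omega
      have r5 : 2*(j+1) - 1 = 2*j+1 := by omega
      rw [r3, r1] at e1
      rw [r2, r1] at e2
      rw [r5, r4] at e3
      have hrec : E (2*j+5) = (E (2*j+3) + E (2*j+1)) / 2 + 2 := by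
        have : 2*j+4+1 = 2*j+5 := by omega
        rw [this] at e1
        rw [e2, e3] at e1
        linarith
      have goalr : 2*(j+1+1)+1 = 2*j+5 := by omega
      have hj1' : E (2*j+3) ≥ (4/3) * ((j:ℝ)+1) + 2/3 := by
        have : 2*(j+1)+1 = 2*j+3 := by omega
        rw [this] at hj1
        push_cast at hj1
        linarith
      rw [goalr, hrec]
      push_cast
      linarith
  intro n hn
  have h7 : 2*n - 7 = 2*(n-4)+1 := by omega
  have := (key (n-4)).1
  rw [h7]
  have hc : ((n - 4 : ℕ) : ℝ) = (n : ℝ) - 4 := by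
    push_cast [Nat.cast_sub hn]; ring
  rw [hc] at this
  calc (4/3) * (n : ℝ) - 14/3 = (4/3) * ((n:ℝ) - 4) + 2/3 := by ring
    _ ≤ E (2*(n-4)+1) := this
    _ ≤ max (E (2*n-8)) (E (2*(n-4)+1)) := le_max_right _ _
end

section
/- In the Random Edge graph setting with n ≥ 6, assume additionally that G is 3-connected. Let v be a 2-vertex whose two lower neighbors w1 > w2 are exactly the two elements of V immediately below v in the linear order, suppose w1 is a 2-vertex adjacent to w2, let w4 be the lower neighbor of w1 other than w2, suppose w2 is a 1-vertex, and let x be the unique lower neighbor of w2. Then x ≠ w4. -/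
open Finset

theorem case_2ciii_x_ne_w4
    (n : ℕ) (hn : 4 ≤ n)
    (V : Type) [Fintype V] [LinearOrder V]
    (hcard : Fintype.card V = 2 * n - 4)
    (vmin vmax : V)
    (hvmin : ∀ v : V, vmin ≤ v) (hvmax : ∀ v : V, v ≤ vmax)
    (G : SimpleGraph V) [DecidableRel G.Adj]
    (hreg : ∀ v : V, (G.neighborFinset v).card = 3)
    (low : V → Finset V)
    (hlow : ∀ v : V, low v = (G.neighborFinset v).filter (fun w => w < v))
    (d : V → ℕ) (hd : ∀ v : V, d v = (low v).card)
    (hlower : ∀ v : V, v ≠ vmin → 1 ≤ d v)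
    (hupper : ∀ v : V, v ≠ vmax → ∃ u : V, G.Adj v u ∧ v < u)
    (hconn : ∀ S : Finset V, S.card ≤ 2 → (G.induce ((↑S : Set V)ᶜ)).Connected)
    (hn6 : 6 ≤ n)
    (v w1 w2 w4 x : V)
    (hv2 : d v = 2)
    (hlowv : low v = {w1, w2})
    (hw21 : w2 < w1) (hw1v : w1 < v)
    (himm1 : ∀ u : V, u < v → u ≤ w1)
    (himm2 : ∀ u : V, u < w1 → u ≤ w2)
    (hw1_2 : d w1 = 2)
    (hadj12 : G.Adj w1 w2)
    (hloww1 : low w1 = {w2, w4}) (hw4ne : w4 ≠ w2)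
    (hw2_1 : d w2 = 1)
    (hloww2 : low w2 = {x}) :
    x ≠ w4 := by
  intro hxw4
  subst hxw4
  -- basic membership facts
  have hfv : (G.neighborFinset v).filter (fun w => w < v) = {w1, w2} := by
    rw [← hlow, hlowv]
  have hfw1 : (G.neighborFinset w1).filter (fun w => w < w1) = {w2, x} := by
    rw [← hlow, hloww1]
  have hfw2 : (G.neighborFinset w2).filter (fun w => w < w2) = {x} := by
    rw [← hlow, hloww2]
  have hw1mem : w1 ∈ (G.neighborFinset v).filter (fun w => w < v) := by
    rw [hfv]; simp
  have hw2mem : w2 ∈ (G.neighborFinset v).filter (fun w => w < v) := by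
    rw [hfv]; simp
  have hxmem : x ∈ (G.neighborFinset w2).filter (fun w => w < w2) := by
    rw [hfw2]; simp
  have hxw1mem : x ∈ (G.neighborFinset w1).filter (fun w => w < w1) := by
    rw [hfw1]; simp
  have hw2w1mem : w2 ∈ (G.neighborFinset w1).filter (fun w => w < w1) := by
    rw [hfw1]; simp
  have hadjvw1 : G.Adj v w1 := by
    have := (Finset.mem_filter.mp hw1mem).1; rwa [SimpleGraph.mem_neighborFinset] at this
  have hadjvw2 : G.Adj v w2 := by
    have := (Finset.mem_filter.mp hw2mem).1; rwa [SimpleGraph.mem_neighborFinset] at this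
  have hadjw2x : G.Adj w2 x := by
    have := (Finset.mem_filter.mp hxmem).1; rwa [SimpleGraph.mem_neighborFinset] at this
  have hxw2 : x < w2 := (Finset.mem_filter.mp hxmem).2
  have hxw1 : x < w1 := lt_trans hxw2 hw21
  have hxv : x < v := lt_trans hxw1 hw1v
  have hw2v : w2 < v := lt_trans hw21 hw1v
  -- the upper neighbor u of v
  have hsub : ({w1, w2} : Finset V) ⊆ G.neighborFinset v := by
    intro a ha
    simp only [Finset.mem_insert, Finset.mem_singleton] at ha
    rcases ha with rfl | rfl
    · exact (Finset.mem_filter.mp hw1mem).1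
    · exact (Finset.mem_filter.mp hw2mem).1
  have hcard2 : ({w1, w2} : Finset V).card = 2 := by
    rw [Finset.card_insert_of_notMem (by simp [ne_of_gt hw21]), Finset.card_singleton]
  have hne : (G.neighborFinset v \ {w1, w2}).Nonempty := by
    rw [← Finset.card_pos, Finset.card_sdiff_of_subset hsub, hreg, hcard2]; norm_num
  obtain ⟨u, hu⟩ := hne
  rw [Finset.mem_sdiff] at hu
  obtain ⟨huN, hune⟩ := hu
  simp only [Finset.mem_insert, Finset.mem_singleton, not_or] at hune
  have hadjvu : G.Adj v u := (SimpleGraph.mem_neighborFinset _ _ _).mp huN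
  have hvu : v < u := by
    rcases lt_or_gt_of_ne (G.ne_of_adj hadjvu) with h | h
    · exact h
    · exfalso
      have : u ∈ (G.neighborFinset v).filter (fun w => w < v) :=
        Finset.mem_filter.mpr ⟨huN, h⟩
      rw [hfv] at this
      simp only [Finset.mem_insert, Finset.mem_singleton] at this
      tauto
  -- neighbor sets are completely determined
  have hNv : G.neighborFinset v = {w1, w2, u} := by
    refine (Finset.eq_of_subset_of_card_le ?_ ?_).symm
    · intro a ha
      simp only [Finset.mem_insert, Finset.mem_singleton] at ha
      rcases ha with rfl | rfl | rfl
      · exact (Finset.mem_filter.mp hw1mem).1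
      · exact (Finset.mem_filter.mp hw2mem).1
      · exact huN
    · rw [hreg]
      rw [Finset.card_insert_of_notMem (by simp [ne_of_gt hw21, (Ne.symm hune.1)]),
        Finset.card_insert_of_notMem (by simp [Ne.symm hune.2]), Finset.card_singleton]
  have hNw1 : G.neighborFinset w1 = {w2, x, v} := by
    refine (Finset.eq_of_subset_of_card_le ?_ ?_).symm
    · intro a ha
      simp only [Finset.mem_insert, Finset.mem_singleton] at ha
      rcases ha with rfl | rfl | rfl
      · exact (Finset.mem_filter.mp hw2w1mem).1
      · exact (Finset.mem_filter.mp hxw1mem).1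
      · exact (SimpleGraph.mem_neighborFinset _ _ _).mpr hadjvw1.symm
    · rw [hreg]
      rw [Finset.card_insert_of_notMem
          (by simp [ne_of_gt hxw2, ne_of_lt hw2v]),
        Finset.card_insert_of_notMem (by simp [ne_of_lt hxv]), Finset.card_singleton]
  have hNw2 : G.neighborFinset w2 = {x, w1, v} := by
    refine (Finset.eq_of_subset_of_card_le ?_ ?_).symm
    · intro a ha
      simp only [Finset.mem_insert, Finset.mem_singleton] at ha
      rcases ha with rfl | rfl | rfl
      · exact (Finset.mem_filter.mp hxmem).1
      · exact (SimpleGraph.mem_neighborFinset _ _ _).mpr hadj12.symm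
      · exact (SimpleGraph.mem_neighborFinset _ _ _).mpr hadjvw2.symm
    · rw [hreg]
      rw [Finset.card_insert_of_notMem (by simp [ne_of_lt hxw1, ne_of_lt hxv]),
        Finset.card_insert_of_notMem (by simp [ne_of_lt hw1v]), Finset.card_singleton]
  -- the separating set
  set S : Finset V := {x, u} with hS
  have hScard : S.card ≤ 2 :=
    le_trans (Finset.card_insert_le _ _) (by simp)
  have hC := hconn S hScard
  -- membership of v, w1, w2 in the complement of S
  have hvS : v ∈ (↑S : Set V)ᶜ := by
    simp only [hS, Set.mem_compl_iff, Finset.coe_insert, Finset.coe_singleton,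
      Set.mem_insert_iff, Set.mem_singleton_iff, not_or]
    exact ⟨ne_of_gt hxv, ne_of_lt hvu⟩
  -- some vertex outside everything
  have h8 : 8 ≤ Fintype.card V := by omega
  have hnsub : ¬ (Finset.univ : Finset V) ⊆ {v, w1, w2, x, u} := by
    intro hsub'
    have h5 : ({v, w1, w2, x, u} : Finset V).card ≤ 5 := by
      refine le_trans (Finset.card_insert_le _ _) ?_
      refine Nat.succ_le_succ (le_trans (Finset.card_insert_le _ _) ?_)
      refine Nat.succ_le_succ (le_trans (Finset.card_insert_le _ _) ?_)
      refine Nat.succ_le_succ (le_trans (Finset.card_insert_le _ _) ?_)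
      simp
    have := Finset.card_le_card hsub'
    rw [Finset.card_univ] at this
    omega
  obtain ⟨z, hz⟩ := Finset.sdiff_nonempty.mpr hnsub
  rw [Finset.mem_sdiff] at hz
  have hzne := hz.2
  simp only [Finset.mem_insert, Finset.mem_singleton, not_or] at hzne
  obtain ⟨hzv, hzw1, hzw2, hzx, hzu⟩ := hzne
  have hzS : z ∈ (↑S : Set V)ᶜ := by
    simp only [hS, Set.mem_compl_iff, Finset.coe_insert, Finset.coe_singleton,
      Set.mem_insert_iff, Set.mem_singleton_iff, not_or]
    exact ⟨hzx, hzu⟩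
  -- reachability in the induced graph
  obtain ⟨p⟩ := hC.preconnected ⟨v, hvS⟩ ⟨z, hzS⟩
  -- walk stays in {v, w1, w2}
  have key : ∀ (a b : ((↑S : Set V)ᶜ : Set V)) (_ : (G.induce ((↑S : Set V)ᶜ)).Walk a b),
      ((a : V) = v ∨ (a : V) = w1 ∨ (a : V) = w2) →
      ((b : V) = v ∨ (b : V) = w1 ∨ (b : V) = w2) := by
    intro a b p
    induction p with
    | nil => exact id
    | @cons a c b hac p ih =>
      intro ha
      apply ih
      have hadj : G.Adj (a : V) (c : V) := hac
      have hcS : (c : V) ∈ (↑S : Set V)ᶜ := c.2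
      simp only [hS, Set.mem_compl_iff, Finset.coe_insert, Finset.coe_singleton,
        Set.mem_insert_iff, Set.mem_singleton_iff, not_or] at hcS
      obtain ⟨hcx, hcu⟩ := hcS
      rcases ha with ha | ha | ha
      · rw [ha] at hadj
        have : (c : V) ∈ G.neighborFinset v := (SimpleGraph.mem_neighborFinset _ _ _).mpr hadj
        rw [hNv] at this
        simp only [Finset.mem_insert, Finset.mem_singleton] at this
        rcases this with h | h | h
        · exact Or.inr (Or.inl h)
        · exact Or.inr (Or.inr h)
        · exact absurd h hcu
      · rw [ha] at hadj
        have : (c : V) ∈ G.neighborFinset w1 := (SimpleGraph.mem_neighborFinset _ _ _).mpr hadj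
        rw [hNw1] at this
        simp only [Finset.mem_insert, Finset.mem_singleton] at this
        rcases this with h | h | h
        · exact Or.inr (Or.inr h)
        · exact absurd h hcx
        · exact Or.inl h
      · rw [ha] at hadj
        have : (c : V) ∈ G.neighborFinset w2 := (SimpleGraph.mem_neighborFinset _ _ _).mpr hadj
        rw [hNw2] at this
        simp only [Finset.mem_insert, Finset.mem_singleton] at this
        rcases this with h | h | h
        · exact absurd h hcx
        · exact Or.inr (Or.inl h)
        · exact Or.inl h
  have := key _ _ p (Or.inl rfl)
  simp only at this
  tauto
end

section
/- In the Random Edge graph setting, let v be a 2-vertex with lower neighbors w1 > w2, and suppose N(v) − N(w2) ≥ 4. Let α ≥ 0 and β ≥ 2/5 be reals such that E(w_i) ≤ α·N1(w_i) + β·N(w_i) for i = 1, 2. Then E(v) ≤ α·N1(v) + β·N(v). -/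
open Finset

theorem case2a_two_vertex
    (n : ℕ) (hn : 4 ≤ n)
    (V : Type) [Fintype V] [LinearOrder V]
    (hcard : Fintype.card V = 2 * n - 4)
    (vmin vmax : V)
    (hvmin : ∀ v : V, vmin ≤ v) (hvmax : ∀ v : V, v ≤ vmax)
    (G : SimpleGraph V) [DecidableRel G.Adj]
    (hreg : ∀ v : V, (G.neighborFinset v).card = 3)
    (low : V → Finset V)
    (hlow : ∀ v : V, low v = (G.neighborFinset v).filter (fun w => w < v))
    (d : V → ℕ) (hd : ∀ v : V, d v = (low v).card)
    (hlower : ∀ v : V, v ≠ vmin → 1 ≤ d v)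
    (hupper : ∀ v : V, v ≠ vmax → ∃ u : V, G.Adj v u ∧ v < u)
    (E : V → ℝ) (hE0 : E vmin = 0)
    (hE : ∀ v : V, v ≠ vmin → E v = 1 + (1 / (d v : ℝ)) * ∑ w ∈ low v, E w)
    (N1 N2 N : V → ℕ)
    (hN1 : ∀ v : V, N1 v = (Finset.univ.filter (fun w => w ≤ v ∧ d w = 1)).card)
    (hN2 : ∀ v : V, N2 v = (Finset.univ.filter (fun w => w ≤ v ∧ d w = 2)).card)
    (hN : ∀ v : V, N v = N1 v + N2 v)
    (v w1 w2 : V) (hv2 : d v = 2) (hlowv : low v = {w1, w2}) (hw21 : w2 < w1)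
    (hdist : N w2 + 4 ≤ N v)
    (α β : ℝ) (hα : 0 ≤ α) (hβ : β ≥ 2/5)
    (hw1 : E w1 ≤ α * (N1 w1 : ℝ) + β * (N w1 : ℝ))
    (hw2 : E w2 ≤ α * (N1 w2 : ℝ) + β * (N w2 : ℝ)) :
    E v ≤ α * (N1 v : ℝ) + β * (N v : ℝ) := by

  have hne : w1 ≠ w2 := ne_of_gt hw21
  have hw1v : w1 < v := by
    have : w1 ∈ low v := by rw [hlowv]; simp
    rw [hlow] at this
    exact (Finset.mem_filter.mp this).2
  have hw2v : w2 < v := lt_trans hw21 hw1v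
  have hvmin' : v ≠ vmin := by
    intro h
    exact absurd (hvmin w1) (not_le.mpr (h ▸ hw1v))
  have hEv : E v = 1 + (E w1 + E w2) / 2 := by
    rw [hE v hvmin', hv2, hlowv, Finset.sum_insert (by simp [hne]), Finset.sum_singleton]
    ring
  -- monotonicity
  have hmono1 : N1 w1 ≤ N1 v := by
    rw [hN1, hN1]
    apply Finset.card_le_card
    intro x hx
    simp only [Finset.mem_filter] at *
    exact ⟨hx.1, le_trans hx.2.1 hw1v.le, hx.2.2⟩
  have hmono2 : N1 w2 ≤ N1 v := by
    rw [hN1, hN1]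
    apply Finset.card_le_card
    intro x hx
    simp only [Finset.mem_filter] at *
    exact ⟨hx.1, le_trans hx.2.1 hw2v.le, hx.2.2⟩
  have hstrict : N w1 + 1 ≤ N v := by
    rw [hN, hN]
    have h1 : N1 w1 ≤ N1 v := hmono1
    have h2 : N2 w1 < N2 v := by
      rw [hN2, hN2]
      apply Finset.card_lt_card
      constructor
      · intro x hx
        simp only [Finset.mem_filter] at *
        exact ⟨hx.1, le_trans hx.2.1 hw1v.le, hx.2.2⟩
      · intro hsub
        have hvmem : v ∈ Finset.univ.filter (fun w => w ≤ v ∧ d w = 2) := by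
          simp [hv2]
        have := hsub hvmem
        simp only [Finset.mem_filter] at this
        exact absurd this.2.1 (not_le.mpr hw1v)
    omega
  -- cast to reals
  have c1 : (N1 w1 : ℝ) ≤ (N1 v : ℝ) := by exact_mod_cast hmono1
  have c2 : (N1 w2 : ℝ) ≤ (N1 v : ℝ) := by exact_mod_cast hmono2
  have c3 : (N w1 : ℝ) + 1 ≤ (N v : ℝ) := by exact_mod_cast hstrict
  have c4 : (N w2 : ℝ) + 4 ≤ (N v : ℝ) := by exact_mod_cast hdist
  rw [hEv]
  nlinarith [mul_le_mul_of_nonneg_left c1 hα, mul_le_mul_of_nonneg_left c2 hα,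
    mul_le_mul_of_nonneg_left c3 (by linarith : (0:ℝ) ≤ β),
    mul_le_mul_of_nonneg_left c4 (by linarith : (0:ℝ) ≤ β)]
end

section
/- In the Random Edge graph setting, let v be a 2-vertex with lower neighbors w1 > w2, suppose exactly two vertices of V lie strictly between w2 and v in the linear order, and suppose at least one of these two intermediate vertices is a 1-vertex. Let α, β ≥ 0 be reals with (1/2)α + 2β ≥ 1 such that E(w_i) ≤ α·N1(w_i) + β·N(w_i) for i = 1, 2. Then E(v) ≤ α·N1(v) + β·N(v). -/
open Finset

lemma split_count {V : Type} [Fintype V] [LinearOrder V] (P : V → Prop) [DecidablePred P]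
    (a b : V) (hab : a ≤ b) :
    (Finset.univ.filter (fun w => w ≤ b ∧ P w)).card =
    (Finset.univ.filter (fun w => w ≤ a ∧ P w)).card +
    (Finset.univ.filter (fun w => a < w ∧ w ≤ b ∧ P w)).card := by
  rw [← Finset.card_union_of_disjoint]
  · congr 1
    ext w
    simp only [Finset.mem_union, Finset.mem_filter, Finset.mem_univ, true_and]
    constructor
    · rintro ⟨hwb, hP⟩
      rcases le_or_gt w a with h | h
      · exact Or.inl ⟨h, hP⟩
      · exact Or.inr ⟨h, hwb, hP⟩
    · rintro (⟨h, hP⟩ | ⟨_, h, hP⟩)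
      · exact ⟨h.trans hab, hP⟩
      · exact ⟨h, hP⟩
  · rw [Finset.disjoint_left]
    intro w hw hw'
    simp only [Finset.mem_filter] at hw hw'
    exact absurd hw.2.1 (not_le.mpr hw'.2.1)

theorem case2bi_two_vertex
    (n : ℕ) (hn : 4 ≤ n)
    (V : Type) [Fintype V] [LinearOrder V]
    (hcard : Fintype.card V = 2 * n - 4)
    (vmin vmax : V)
    (hvmin : ∀ v : V, vmin ≤ v) (hvmax : ∀ v : V, v ≤ vmax)
    (G : SimpleGraph V) [DecidableRel G.Adj]
    (hreg : ∀ v : V, (G.neighborFinset v).card = 3)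
    (low : V → Finset V)
    (hlow : ∀ v : V, low v = (G.neighborFinset v).filter (fun w => w < v))
    (d : V → ℕ) (hd : ∀ v : V, d v = (low v).card)
    (hlower : ∀ v : V, v ≠ vmin → 1 ≤ d v)
    (hupper : ∀ v : V, v ≠ vmax → ∃ u : V, G.Adj v u ∧ v < u)
    (E : V → ℝ) (hE0 : E vmin = 0)
    (hE : ∀ v : V, v ≠ vmin → E v = 1 + (1 / (d v : ℝ)) * ∑ w ∈ low v, E w)
    (N1 N2 N : V → ℕ)
    (hN1 : ∀ v : V, N1 v = (Finset.univ.filter (fun w => w ≤ v ∧ d w = 1)).card)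
    (hN2 : ∀ v : V, N2 v = (Finset.univ.filter (fun w => w ≤ v ∧ d w = 2)).card)
    (hN : ∀ v : V, N v = N1 v + N2 v)
    (v w1 w2 : V) (hv2 : d v = 2) (hlowv : low v = {w1, w2}) (hw21 : w2 < w1)
    (hbetween : (Finset.univ.filter (fun u : V => w2 < u ∧ u < v)).card = 2)
    (hone : ∃ u : V, w2 < u ∧ u < v ∧ d u = 1)
    (α β : ℝ) (hα : 0 ≤ α) (hβ : 0 ≤ β) (hαβ : (1/2) * α + 2 * β ≥ 1)
    (hw1 : E w1 ≤ α * (N1 w1 : ℝ) + β * (N w1 : ℝ))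
    (hw2 : E w2 ≤ α * (N1 w2 : ℝ) + β * (N w2 : ℝ)) :
    E v ≤ α * (N1 v : ℝ) + β * (N v : ℝ) := by
  classical
  -- basic facts
  have hmemw1 : w1 ∈ low v := by rw [hlowv]; simp
  have hmemw2 : w2 ∈ low v := by rw [hlowv]; simp
  rw [hlow v, Finset.mem_filter] at hmemw1 hmemw2
  have hw1v : w1 < v := hmemw1.2
  have hw2v : w2 < v := hmemw2.2
  have hvne : v ≠ vmin := by
    intro h
    exact absurd (hvmin w1) (not_le.mpr (h ▸ hw1v))
  have hne12 : w1 ≠ w2 := hw21.ne'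
  have hEv : E v = 1 + (1/2) * (E w1 + E w2) := by
    rw [hE v hvne, hv2, hlowv, Finset.sum_pair hne12]
    norm_num
  -- d vmax = 3
  have hdmax : d vmax = 3 := by
    rw [hd, hlow]
    have heq : (G.neighborFinset vmax).filter (fun w => w < vmax) = G.neighborFinset vmax := by
      apply Finset.filter_true_of_mem
      intro w hw
      rw [SimpleGraph.mem_neighborFinset] at hw
      exact lt_of_le_of_ne (hvmax w) hw.ne'
    rw [heq, hreg]
  have hvltmax : v < vmax := by
    refine lt_of_le_of_ne (hvmax v) ?_
    intro h
    rw [h, hdmax] at hv2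
    omega
  -- every vertex strictly between w2 and v (inclusive v) has d ∈ {1,2}
  have hdx : ∀ x : V, w2 < x → x ≤ v → d x = 1 ∨ d x = 2 := by
    intro x h1 h2
    have hxmin : x ≠ vmin := by
      intro h
      exact absurd (hvmin w2) (not_le.mpr (h ▸ h1))
    have hxmax : x ≠ vmax := ne_of_lt (lt_of_le_of_lt h2 hvltmax)
    have hl : 1 ≤ d x := hlower x hxmin
    have hu : d x ≤ 2 := by
      obtain ⟨u', hadj, hlt⟩ := hupper x hxmax
      have hu'mem : u' ∈ G.neighborFinset x := by
        rw [SimpleGraph.mem_neighborFinset]; exact hadj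
      have hsub : (G.neighborFinset x).filter (fun w => w < x) ⊆
          (G.neighborFinset x).erase u' := by
        intro w hw
        rw [Finset.mem_filter] at hw
        rw [Finset.mem_erase]
        refine ⟨?_, hw.1⟩
        rintro rfl
        exact absurd hlt (not_lt.mpr hw.2.le)
      have hle := Finset.card_le_card hsub
      rw [Finset.card_erase_of_mem hu'mem, hreg] at hle
      rw [hd, hlow]
      omega
    omega
  -- counting sets
  set S1 := Finset.univ.filter (fun w : V => w2 < w ∧ w ≤ v ∧ d w = 1) with hS1def
  set S2 := Finset.univ.filter (fun w : V => w2 < w ∧ w ≤ v ∧ d w = 2) with hS2def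
  set T1 := Finset.univ.filter (fun w : V => w2 < w ∧ w ≤ w1 ∧ d w = 1) with hT1def
  set T2 := Finset.univ.filter (fun w : V => w2 < w ∧ w ≤ w1 ∧ d w = 2) with hT2def
  have hsplitN1v : N1 v = N1 w2 + S1.card := by
    rw [hN1 v, hN1 w2, split_count (fun w => d w = 1) w2 v hw2v.le]
  have hsplitN2v : N2 v = N2 w2 + S2.card := by
    rw [hN2 v, hN2 w2, split_count (fun w => d w = 2) w2 v hw2v.le]
  have hsplitN1w1 : N1 w1 = N1 w2 + T1.card := by
    rw [hN1 w1, hN1 w2, split_count (fun w => d w = 1) w2 w1 hw21.le]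
  have hsplitN2w1 : N2 w1 = N2 w2 + T2.card := by
    rw [hN2 w1, hN2 w2, split_count (fun w => d w = 2) w2 w1 hw21.le]
  -- S1.card + S2.card = 3
  have hdisjS : Disjoint S1 S2 := by
    rw [Finset.disjoint_left]
    intro w hw hw'
    rw [hS1def, Finset.mem_filter] at hw
    rw [hS2def, Finset.mem_filter] at hw'
    omega
  have hUS : S1 ∪ S2 = Finset.univ.filter (fun w : V => w2 < w ∧ w ≤ v) := by
    ext w
    simp only [hS1def, hS2def, Finset.mem_union, Finset.mem_filter, Finset.mem_univ, true_and]
    constructor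
    · rintro (⟨h1, h2, _⟩ | ⟨h1, h2, _⟩) <;> exact ⟨h1, h2⟩
    · rintro ⟨h1, h2⟩
      rcases hdx w h1 h2 with h | h
      · exact Or.inl ⟨h1, h2, h⟩
      · exact Or.inr ⟨h1, h2, h⟩
  have hcard3 : (Finset.univ.filter (fun w : V => w2 < w ∧ w ≤ v)).card = 3 := by
    have heq : Finset.univ.filter (fun w : V => w2 < w ∧ w ≤ v) =
        insert v (Finset.univ.filter (fun w : V => w2 < w ∧ w < v)) := by
      ext w
      simp only [Finset.mem_insert, Finset.mem_filter, Finset.mem_univ, true_and]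
      constructor
      · rintro ⟨h1, h2⟩
        rcases eq_or_lt_of_le h2 with h | h
        · exact Or.inl h
        · exact Or.inr ⟨h1, h⟩
      · rintro (rfl | ⟨h1, h2⟩)
        · exact ⟨hw2v, le_refl _⟩
        · exact ⟨h1, h2.le⟩
    rw [heq, Finset.card_insert_of_notMem (by simp), hbetween]
  have hScard : S1.card + S2.card = 3 := by
    rw [← Finset.card_union_of_disjoint hdisjS, hUS, hcard3]
  -- T1 ⊆ S1
  have hT1S1 : T1.card ≤ S1.card := by
    apply Finset.card_le_card
    intro w hw
    rw [hT1def, Finset.mem_filter] at hw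
    rw [hS1def, Finset.mem_filter]
    exact ⟨hw.1, hw.2.1, (hw.2.2.1.trans_lt hw1v).le, hw.2.2.2⟩
  -- T1.card + T2.card ≤ 2
  have hdisjT : Disjoint T1 T2 := by
    rw [Finset.disjoint_left]
    intro w hw hw'
    rw [hT1def, Finset.mem_filter] at hw
    rw [hT2def, Finset.mem_filter] at hw'
    omega
  have hTcard : T1.card + T2.card ≤ 2 := by
    rw [← Finset.card_union_of_disjoint hdisjT, ← hbetween]
    apply Finset.card_le_card
    intro w hw
    rw [Finset.mem_union, hT1def, hT2def] at hw
    rw [Finset.mem_filter]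
    rcases hw with hw | hw <;> rw [Finset.mem_filter] at hw <;>
      exact ⟨Finset.mem_univ w, hw.2.1, hw.2.2.1.trans_lt hw1v⟩
  -- S1 nonempty
  have hS1pos : 1 ≤ S1.card := by
    obtain ⟨u, h1, h2, h3⟩ := hone
    apply Finset.card_pos.mpr
    exact ⟨u, by rw [hS1def, Finset.mem_filter]; exact ⟨Finset.mem_univ u, h1, h2.le, h3⟩⟩
  -- pass to reals
  rw [hN w1] at hw1
  rw [hN w2] at hw2
  rw [hN v, hEv, hsplitN1v, hsplitN2v]
  rw [hsplitN1w1, hsplitN2w1] at hw1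
  have r5 : ((S1.card : ℝ)) + (S2.card : ℝ) = 3 := by exact_mod_cast hScard
  have r6 : ((T1.card : ℝ)) ≤ (S1.card : ℝ) := by exact_mod_cast hT1S1
  have r7 : ((T1.card : ℝ)) + (T2.card : ℝ) ≤ 2 := by exact_mod_cast hTcard
  have r8 : (1 : ℝ) ≤ (S1.card : ℝ) := by exact_mod_cast hS1pos
  push_cast at hw1 hw2 ⊢
  nlinarith [mul_nonneg hα (by linarith : (0:ℝ) ≤ 2 * (S1.card : ℝ) - (T1.card : ℝ) - 1),
    mul_nonneg hβ (by linarith : (0:ℝ) ≤ 2 - (T1.card : ℝ) - (T2.card : ℝ)),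
    mul_nonneg hβ (by linarith : (0:ℝ) ≤ 3 - (S1.card : ℝ) - (S2.card : ℝ)),
    mul_nonneg hβ (by linarith : (0:ℝ) ≤ (S1.card : ℝ) + (S2.card : ℝ) - 3)]
end

section
/- In the Random Edge graph setting, let v be a 2-vertex with lower neighbors w1 > w2, suppose the only two vertices of V lying strictly between w2 and v in the linear order are w1 and one further vertex v', suppose both w1 and v' are 2-vertices and v' is a lower neighbor of w1, let x and y be the two lower neighbors of v', let z be the lower neighbor of w1 other than v', and assume none of x, y, z equals w2. Let α ≥ 0 and β ≥ 14/29 be reals such that E(u) ≤ α·N1(u) + β·N(u) for each u ∈ {w2, x, y, z}. Then E(v) ≤ α·N1(v) + β·N(v). -/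
open Finset

theorem case2bii_first_subcase
    (n : ℕ) (hn : 4 ≤ n)
    (V : Type) [Fintype V] [LinearOrder V]
    (hcard : Fintype.card V = 2 * n - 4)
    (vmin vmax : V)
    (hvmin : ∀ v : V, vmin ≤ v) (hvmax : ∀ v : V, v ≤ vmax)
    (G : SimpleGraph V) [DecidableRel G.Adj]
    (hreg : ∀ v : V, (G.neighborFinset v).card = 3)
    (low : V → Finset V)
    (hlow : ∀ v : V, low v = (G.neighborFinset v).filter (fun w => w < v))
    (d : V → ℕ) (hd : ∀ v : V, d v = (low v).card)
    (hlower : ∀ v : V, v ≠ vmin → 1 ≤ d v)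
    (hupper : ∀ v : V, v ≠ vmax → ∃ u : V, G.Adj v u ∧ v < u)
    (E : V → ℝ) (hE0 : E vmin = 0)
    (hE : ∀ v : V, v ≠ vmin → E v = 1 + (1 / (d v : ℝ)) * ∑ w ∈ low v, E w)
    (N1 N2 N : V → ℕ)
    (hN1 : ∀ v : V, N1 v = (Finset.univ.filter (fun w => w ≤ v ∧ d w = 1)).card)
    (hN2 : ∀ v : V, N2 v = (Finset.univ.filter (fun w => w ≤ v ∧ d w = 2)).card)
    (hN : ∀ v : V, N v = N1 v + N2 v)
    (v w1 w2 v' x y z : V)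
    (hv2 : d v = 2) (hlowv : low v = {w1, w2}) (hw21 : w2 < w1)
    (hbetween : ∀ u : V, (w2 < u ∧ u < v) ↔ (u = w1 ∨ u = v')) (hne : v' ≠ w1)
    (hw1_2 : d w1 = 2) (hv'_2 : d v' = 2)
    (hv'low : v' ∈ low w1)
    (hlowv' : low v' = {x, y}) (hxy : x ≠ y)
    (hloww1 : low w1 = {v', z}) (hzv' : z ≠ v')
    (hx : x ≠ w2) (hy : y ≠ w2) (hz : z ≠ w2)
    (α β : ℝ) (hα : 0 ≤ α) (hβ : β ≥ 14/29)
    (hind : ∀ u ∈ ({w2, x, y, z} : Finset V),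
      E u ≤ α * (N1 u : ℝ) + β * (N u : ℝ)) :
    E v ≤ α * (N1 v : ℝ) + β * (N v : ℝ) := by
  -- basic ordering facts
  have lt_of_low : ∀ a b : V, a ∈ low b → a < b := by
    intro a b h
    rw [hlow] at h
    exact (Finset.mem_filter.mp h).2
  have hw1v : w1 < v := lt_of_low _ _ (by rw [hlowv]; simp)
  have hw2v : w2 < v := lt_of_low _ _ (by rw [hlowv]; simp)
  have hv'w1 : v' < w1 := lt_of_low _ _ hv'low
  have hzw1 : z < w1 := lt_of_low _ _ (by rw [hloww1]; simp)
  have hxv' : x < v' := lt_of_low _ _ (by rw [hlowv']; simp)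
  have hyv' : y < v' := lt_of_low _ _ (by rw [hlowv']; simp)
  have hw2v' : w2 < v' := ((hbetween v').mpr (Or.inr rfl)).1
  have hv'v : v' < v := ((hbetween v').mpr (Or.inr rfl)).2
  have hbelow : ∀ u : V, u < v → u ≠ w1 → u ≠ v' → u ≠ w2 → u < w2 := by
    intro u h1 h2 h3 h4
    by_contra h
    push_neg at h
    rcases (hbetween u).mp ⟨lt_of_le_of_ne h (Ne.symm h4), h1⟩ with h' | h'
    · exact h2 h'
    · exact h3 h'
  have hxw2 : x < w2 :=
    hbelow x (hxv'.trans hv'v) (ne_of_lt (hxv'.trans hv'w1)) (ne_of_lt hxv') hx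
  have hyw2 : y < w2 :=
    hbelow y (hyv'.trans hv'v) (ne_of_lt (hyv'.trans hv'w1)) (ne_of_lt hyv') hy
  have hzw2 : z < w2 := hbelow z (hzw1.trans hw1v) (ne_of_lt hzw1) hzv' hz
  -- degree bounds
  have hdle2 : ∀ a : V, a ≠ vmax → d a ≤ 2 := by
    intro a ha
    obtain ⟨u, hadj, hlt⟩ := hupper a ha
    have hsub : low a ⊆ (G.neighborFinset a).erase u := by
      intro b hb
      rw [hlow] at hb
      rw [Finset.mem_erase]
      exact ⟨ne_of_lt ((Finset.mem_filter.mp hb).2.trans hlt),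
        (Finset.mem_filter.mp hb).1⟩
    have h1 := Finset.card_le_card hsub
    rw [Finset.card_erase_of_mem (by simpa using hadj), hreg] at h1
    rw [hd]
    omega
  have hd12 : ∀ a : V, vmin < a → a ≠ vmax → d a = 1 ∨ d a = 2 := by
    intro a h1 h2
    have := hlower a (ne_of_gt h1)
    have := hdle2 a h2
    omega
  have hdw2 : d w2 = 1 ∨ d w2 = 2 :=
    hd12 w2 ((hvmin x).trans_lt hxw2) (ne_of_lt (hw2v.trans_le (hvmax v)))
  -- monotonicity / step lemmas for the counters
  have hN1mono : ∀ a b : V, a ≤ b → N1 a ≤ N1 b := by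
    intro a b hab
    rw [hN1, hN1]
    apply Finset.card_le_card
    intro u hu
    simp only [Finset.mem_filter, Finset.mem_univ, true_and] at hu ⊢
    exact ⟨hu.1.trans hab, hu.2⟩
  have hN2mono : ∀ a b : V, a ≤ b → N2 a ≤ N2 b := by
    intro a b hab
    rw [hN2, hN2]
    apply Finset.card_le_card
    intro u hu
    simp only [Finset.mem_filter, Finset.mem_univ, true_and] at hu ⊢
    exact ⟨hu.1.trans hab, hu.2⟩
  have hNstep : ∀ a b : V, a < b → (d b = 1 ∨ d b = 2) → N a + 1 ≤ N b := by
    intro a b hab hdb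
    rw [hN, hN]
    rcases hdb with hdb | hdb
    · have h1 : N1 a + 1 ≤ N1 b := by
        rw [hN1, hN1]
        have hsub : insert b (Finset.univ.filter (fun w => w ≤ a ∧ d w = 1)) ⊆
            Finset.univ.filter (fun w => w ≤ b ∧ d w = 1) := by
          intro u hu
          rcases Finset.mem_insert.mp hu with rfl | hu
          · simp [hdb]
          · simp only [Finset.mem_filter, Finset.mem_univ, true_and] at hu ⊢
            exact ⟨hu.1.trans hab.le, hu.2⟩
        have hnm : b ∉ Finset.univ.filter (fun w => w ≤ a ∧ d w = 1) := by
          simp only [Finset.mem_filter, Finset.mem_univ, true_and, not_and]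
          intro h
          exact absurd hab (not_lt.mpr h)
        have := Finset.card_le_card hsub
        rwa [Finset.card_insert_of_notMem hnm] at this
      have h2 := hN2mono a b hab.le
      omega
    · have h1 : N2 a + 1 ≤ N2 b := by
        rw [hN2, hN2]
        have hsub : insert b (Finset.univ.filter (fun w => w ≤ a ∧ d w = 2)) ⊆
            Finset.univ.filter (fun w => w ≤ b ∧ d w = 2) := by
          intro u hu
          rcases Finset.mem_insert.mp hu with rfl | hu
          · simp [hdb]
          · simp only [Finset.mem_filter, Finset.mem_univ, true_and] at hu ⊢
            exact ⟨hu.1.trans hab.le, hu.2⟩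
        have hnm : b ∉ Finset.univ.filter (fun w => w ≤ a ∧ d w = 2) := by
          simp only [Finset.mem_filter, Finset.mem_univ, true_and, not_and]
          intro h
          exact absurd hab (not_lt.mpr h)
        have := Finset.card_le_card hsub
        rwa [Finset.card_insert_of_notMem hnm] at this
      have h2 := hN1mono a b hab.le
      omega
  -- counters at v in terms of w2
  have hN1v : N1 v = N1 w2 := by
    rw [hN1, hN1]
    congr 1
    ext u
    simp only [Finset.mem_filter, Finset.mem_univ, true_and]
    constructor
    · rintro ⟨huv, hd1⟩
      refine ⟨?_, hd1⟩
      by_contra h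
      push_neg at h
      rcases eq_or_lt_of_le huv with rfl | hlt
      · rw [hv2] at hd1; exact absurd hd1 (by norm_num)
      · rcases (hbetween u).mp ⟨h, hlt⟩ with rfl | rfl
        · rw [hw1_2] at hd1; exact absurd hd1 (by norm_num)
        · rw [hv'_2] at hd1; exact absurd hd1 (by norm_num)
    · rintro ⟨h1, h2⟩
      exact ⟨h1.trans hw2v.le, h2⟩
  have hN2v : N2 v = N2 w2 + 3 := by
    rw [hN2, hN2]
    have hset : (Finset.univ.filter (fun w => w ≤ v ∧ d w = 2)) =
        insert v (insert w1 (insert v'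
          (Finset.univ.filter (fun w => w ≤ w2 ∧ d w = 2)))) := by
      ext u
      simp only [Finset.mem_filter, Finset.mem_univ, true_and, Finset.mem_insert]
      constructor
      · rintro ⟨huv, hd2⟩
        by_cases h : u ≤ w2
        · exact Or.inr (Or.inr (Or.inr ⟨h, hd2⟩))
        · push_neg at h
          rcases eq_or_lt_of_le huv with rfl | hlt
          · exact Or.inl rfl
          · rcases (hbetween u).mp ⟨h, hlt⟩ with h' | h'
            · exact Or.inr (Or.inl h')
            · exact Or.inr (Or.inr (Or.inl h'))
      · rintro (rfl | rfl | rfl | ⟨h1, h2⟩)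
        · exact ⟨le_refl _, hv2⟩
        · exact ⟨hw1v.le, hw1_2⟩
        · exact ⟨hv'v.le, hv'_2⟩
        · exact ⟨h1.trans hw2v.le, h2⟩
    have hv'nm : v' ∉ (Finset.univ.filter (fun w => w ≤ w2 ∧ d w = 2)) := by
      simp only [Finset.mem_filter, Finset.mem_univ, true_and, not_and]
      intro h
      exact absurd hw2v' (not_lt.mpr h)
    have hw1nm : w1 ∉ insert v' (Finset.univ.filter (fun w => w ≤ w2 ∧ d w = 2)) := by
      simp only [Finset.mem_insert, Finset.mem_filter, Finset.mem_univ, true_and,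
        not_or, not_and]
      exact ⟨hne.symm, fun h => absurd hw21 (not_lt.mpr h)⟩
    have hvnm : v ∉ insert w1 (insert v'
        (Finset.univ.filter (fun w => w ≤ w2 ∧ d w = 2))) := by
      simp only [Finset.mem_insert, Finset.mem_filter, Finset.mem_univ, true_and,
        not_or, not_and]
      exact ⟨ne_of_gt hw1v, ne_of_gt hv'v, fun h => absurd hw2v (not_lt.mpr h)⟩
    rw [hset, Finset.card_insert_of_notMem hvnm, Finset.card_insert_of_notMem hw1nm,
      Finset.card_insert_of_notMem hv'nm]
  have hNv : N v = N w2 + 3 := by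
    rw [hN, hN, hN1v, hN2v]
    omega
  -- expansion of E v
  have hEv : E v = 1 + (1/2 : ℝ) * (E w1 + E w2) := by
    rw [hE v (ne_of_gt ((hvmin w2).trans_lt hw2v)), hlowv,
      Finset.sum_pair (ne_of_gt hw21), hv2]
    norm_num
  have hEw1 : E w1 = 1 + (1/2 : ℝ) * (E v' + E z) := by
    rw [hE w1 (ne_of_gt ((hvmin w2).trans_lt hw21)), hloww1,
      Finset.sum_pair hzv'.symm, hw1_2]
    norm_num
  have hEv' : E v' = 1 + (1/2 : ℝ) * (E x + E y) := by
    rw [hE v' (ne_of_gt ((hvmin w2).trans_lt hw2v')), hlowv',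
      Finset.sum_pair hxy, hv'_2]
    norm_num
  have hEfull : E v = 7/4 + (1/2) * E w2 + (1/4) * E z + (1/8) * E x + (1/8) * E y := by
    rw [hEv, hEw1, hEv']; ring
  -- inductive bounds
  have hw2b := hind w2 (by simp)
  have hxb := hind x (by simp)
  have hyb := hind y (by simp)
  have hzb := hind z (by simp)
  -- counting inequalities
  have hN1x : N1 x ≤ N1 w2 := hN1mono x w2 hxw2.le
  have hN1y : N1 y ≤ N1 w2 := hN1mono y w2 hyw2.le
  have hN1z : N1 z ≤ N1 w2 := hN1mono z w2 hzw2.le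
  have hNz1 : N z + 1 ≤ N w2 := hNstep z w2 hzw2 hdw2
  have hNx1 : N x + 1 ≤ N w2 := hNstep x w2 hxw2 hdw2
  have hNy1 : N y + 1 ≤ N w2 := hNstep y w2 hyw2 hdw2
  have hNxy : N x + N y + 3 ≤ N w2 + N w2 := by
    rcases lt_or_gt_of_ne hxy with h | h
    · have hdy : d y = 1 ∨ d y = 2 :=
        hd12 y ((hvmin x).trans_lt h) (ne_of_lt ((hyw2.trans hw2v).trans_le (hvmax v)))
      have := hNstep x y h hdy
      omega
    · have hdx : d x = 1 ∨ d x = 2 :=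
        hd12 x ((hvmin y).trans_lt h) (ne_of_lt ((hxw2.trans hw2v).trans_le (hvmax v)))
      have := hNstep y x h hdx
      omega
  -- move to the reals
  have hβ0 : (0:ℝ) ≤ β := le_trans (by norm_num) hβ
  have cNz : (N z : ℝ) + 1 ≤ (N w2 : ℝ) := by exact_mod_cast hNz1
  have cNxy : (N x : ℝ) + (N y : ℝ) + 3 ≤ (N w2 : ℝ) + (N w2 : ℝ) := by
    exact_mod_cast hNxy
  have cN1x : (N1 x : ℝ) ≤ (N1 w2 : ℝ) := by exact_mod_cast hN1x
  have cN1y : (N1 y : ℝ) ≤ (N1 w2 : ℝ) := by exact_mod_cast hN1y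
  have cN1z : (N1 z : ℝ) ≤ (N1 w2 : ℝ) := by exact_mod_cast hN1z
  rw [hN1v, hNv]
  push_cast
  have p1 := mul_le_mul_of_nonneg_left cNz hβ0
  have p2 := mul_le_mul_of_nonneg_left cNxy hβ0
  have p3 := mul_le_mul_of_nonneg_left cN1x hα
  have p4 := mul_le_mul_of_nonneg_left cN1y hα
  have p5 := mul_le_mul_of_nonneg_left cN1z hα
  linarith [hw2b, hxb, hyb, hzb]
end

section
/- In the Random Edge graph setting, let v be a 2-vertex whose lower neighbors w1 > w2 are exactly the two elements of V immediately below v in the linear order; suppose w1 is a 2-vertex adjacent to w2 with other lower neighbor w4; suppose w2 is a 1-vertex whose unique lower neighbor x satisfies w4 < x; suppose x is a 1-vertex whose unique lower neighbor is w4; assume w4 ≠ v_min and let z be the unique lower neighbor of w4. Let α, β ≥ 0 be reals with 3α + 5β ≥ 4 such that E(z) ≤ α·N1(z) + β·N(z). Then E(v) = 4 + E(z) and E(v) ≤ α·N1(v) + β·N(v). -/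
open Finset

theorem case_2ciii1_tight
    (n : ℕ) (hn : 4 ≤ n)
    (V : Type) [Fintype V] [LinearOrder V]
    (hcard : Fintype.card V = 2 * n - 4)
    (vmin vmax : V)
    (hvmin : ∀ v : V, vmin ≤ v) (hvmax : ∀ v : V, v ≤ vmax)
    (G : SimpleGraph V) [DecidableRel G.Adj]
    (hreg : ∀ v : V, (G.neighborFinset v).card = 3)
    (low : V → Finset V)
    (hlow : ∀ v : V, low v = (G.neighborFinset v).filter (fun w => w < v))
    (d : V → ℕ) (hd : ∀ v : V, d v = (low v).card)
    (hlower : ∀ v : V, v ≠ vmin → 1 ≤ d v)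
    (hupper : ∀ v : V, v ≠ vmax → ∃ u : V, G.Adj v u ∧ v < u)
    (E : V → ℝ) (hE0 : E vmin = 0)
    (hE : ∀ v : V, v ≠ vmin → E v = 1 + (1 / (d v : ℝ)) * ∑ w ∈ low v, E w)
    (N1 N2 N : V → ℕ)
    (hN1 : ∀ v : V, N1 v = (Finset.univ.filter (fun w => w ≤ v ∧ d w = 1)).card)
    (hN2 : ∀ v : V, N2 v = (Finset.univ.filter (fun w => w ≤ v ∧ d w = 2)).card)
    (hN : ∀ v : V, N v = N1 v + N2 v)
    (v w1 w2 w4 x z : V)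
    (hv2 : d v = 2) (hlowv : low v = {w1, w2})
    (hw21 : w2 < w1) (hw1v : w1 < v)
    (himm1 : ∀ u : V, u < v → u ≤ w1)
    (himm2 : ∀ u : V, u < w1 → u ≤ w2)
    (hw1_2 : d w1 = 2) (hadj12 : G.Adj w1 w2)
    (hloww1 : low w1 = {w2, w4}) (hw4ne : w4 ≠ w2)
    (hw2_1 : d w2 = 1) (hloww2 : low w2 = {x}) (hw4x : w4 < x)
    (hx1 : d x = 1) (hlowx : low x = {w4})
    (hw4min : w4 ≠ vmin) (hloww4 : low w4 = {z})
    (α β : ℝ) (hα : 0 ≤ α) (hβ : 0 ≤ β) (hαβ : 3 * α + 5 * β ≥ 4)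
    (hz : E z ≤ α * (N1 z : ℝ) + β * (N z : ℝ)) :
    E v = 4 + E z ∧ E v ≤ α * (N1 v : ℝ) + β * (N v : ℝ) := by
  -- order facts
  have hzw4 : z < w4 := by
    have h : z ∈ low w4 := by rw [hloww4]; simp
    rw [hlow] at h; exact (Finset.mem_filter.mp h).2
  have hxw2 : x < w2 := by
    have h : x ∈ low w2 := by rw [hloww2]; simp
    rw [hlow] at h; exact (Finset.mem_filter.mp h).2
  have hw4w1 : w4 < w1 := by
    have h : w4 ∈ low w1 := by rw [hloww1]; simp
    rw [hlow] at h; exact (Finset.mem_filter.mp h).2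
  have hdw4 : d w4 = 1 := by rw [hd, hloww4]; simp
  -- ne vmin facts
  have hxmin : x ≠ vmin := (lt_of_le_of_lt (hvmin w4) hw4x).ne'
  have hw2min : w2 ≠ vmin := (lt_of_le_of_lt (hvmin x) hxw2).ne'
  have hw1min : w1 ≠ vmin := (lt_of_le_of_lt (hvmin w2) hw21).ne'
  have hvmin' : v ≠ vmin := (lt_of_le_of_lt (hvmin w1) hw1v).ne'
  -- E computations
  have Ew4 : E w4 = 1 + E z := by
    rw [hE w4 hw4min, hdw4, hloww4]; simp
  have Ex : E x = 1 + E w4 := by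
    rw [hE x hxmin, hx1, hlowx]; simp
  have Ew2 : E w2 = 1 + E x := by
    rw [hE w2 hw2min, hw2_1, hloww2]; simp
  have Ew1 : E w1 = 1 + (E w2 + E w4) / 2 := by
    rw [hE w1 hw1min, hw1_2, hloww1, Finset.sum_pair hw4ne.symm]; push_cast; ring
  have Ev : E v = 1 + (E w1 + E w2) / 2 := by
    rw [hE v hvmin', hv2, hlowv, Finset.sum_pair hw21.ne']; push_cast; ring
  have hEv : E v = 4 + E z := by linarith
  refine ⟨hEv, ?_⟩
  -- counting
  have hne1 : w4 ≠ x := hw4x.ne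
  have hne2 : w4 ≠ w2 := hw4ne
  have hne3 : x ≠ w2 := hxw2.ne
  have hw2v : w2 < v := hw21.trans hw1v
  have hN1le : N1 z + 3 ≤ N1 v := by
    rw [hN1 v, hN1 z]
    have hsub : ({w4, x, w2} : Finset V) ∪
        Finset.univ.filter (fun w => w ≤ z ∧ d w = 1) ⊆
        Finset.univ.filter (fun w => w ≤ v ∧ d w = 1) := by
      intro u hu
      simp only [Finset.mem_union, Finset.mem_insert, Finset.mem_singleton,
        Finset.mem_filter, Finset.mem_univ, true_and] at hu ⊢
      rcases hu with (h | h | h) | ⟨h1, h2⟩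
      · exact ⟨by rw [h]; exact le_of_lt ((hw4x.trans hxw2).trans hw2v), by rw [h]; exact hdw4⟩
      · exact ⟨by rw [h]; exact le_of_lt (hxw2.trans hw2v), by rw [h]; exact hx1⟩
      · exact ⟨by rw [h]; exact le_of_lt hw2v, by rw [h]; exact hw2_1⟩
      · exact ⟨h1.trans (le_of_lt ((hzw4.trans (hw4x.trans hxw2)).trans hw2v)), h2⟩
    have hdisj : Disjoint ({w4, x, w2} : Finset V)
        (Finset.univ.filter (fun w => w ≤ z ∧ d w = 1)) := by
      simp only [Finset.disjoint_left, Finset.mem_insert, Finset.mem_singleton,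
        Finset.mem_filter, Finset.mem_univ, true_and, not_and]
      rintro u (h | h | h) hu
      · subst h; exact absurd hu (not_le.mpr hzw4)
      · subst h; exact absurd hu (not_le.mpr (hzw4.trans hw4x))
      · subst h; exact absurd hu (not_le.mpr ((hzw4.trans hw4x).trans hxw2))
    have hc3 : ({w4, x, w2} : Finset V).card = 3 := by
      rw [Finset.card_insert_of_notMem (by simp [hne1, hne2]),
        Finset.card_insert_of_notMem (by simp [hne3]), Finset.card_singleton]
    calc _ + 3 = (({w4, x, w2} : Finset V) ∪
            Finset.univ.filter (fun w => w ≤ z ∧ d w = 1)).card := by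
          rw [Finset.card_union_of_disjoint hdisj, hc3]; omega
      _ ≤ _ := Finset.card_le_card hsub
  have hN2le : N2 z + 2 ≤ N2 v := by
    rw [hN2 v, hN2 z]
    have hsub : ({w1, v} : Finset V) ∪
        Finset.univ.filter (fun w => w ≤ z ∧ d w = 2) ⊆
        Finset.univ.filter (fun w => w ≤ v ∧ d w = 2) := by
      intro u hu
      simp only [Finset.mem_union, Finset.mem_insert, Finset.mem_singleton,
        Finset.mem_filter, Finset.mem_univ, true_and] at hu ⊢
      rcases hu with (h | h) | ⟨h1, h2⟩
      · exact ⟨by rw [h]; exact le_of_lt hw1v, by rw [h]; exact hw1_2⟩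
      · exact ⟨by rw [h], by rw [h]; exact hv2⟩
      · exact ⟨h1.trans (le_of_lt ((hzw4.trans hw4w1).trans hw1v)), h2⟩
    have hdisj : Disjoint ({w1, v} : Finset V)
        (Finset.univ.filter (fun w => w ≤ z ∧ d w = 2)) := by
      simp only [Finset.disjoint_left, Finset.mem_insert, Finset.mem_singleton,
        Finset.mem_filter, Finset.mem_univ, true_and, not_and]
      rintro u (h | h) hu
      · subst h; exact absurd hu (not_le.mpr (hzw4.trans hw4w1))
      · subst h; exact absurd hu (not_le.mpr ((hzw4.trans hw4w1).trans hw1v))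
    have hc2 : ({w1, v} : Finset V).card = 2 := by
      rw [Finset.card_insert_of_notMem (by simp [hw1v.ne]), Finset.card_singleton]
    calc _ + 2 = (({w1, v} : Finset V) ∪
            Finset.univ.filter (fun w => w ≤ z ∧ d w = 2)).card := by
          rw [Finset.card_union_of_disjoint hdisj, hc2]; omega
      _ ≤ _ := Finset.card_le_card hsub
  have hNle : N z + 5 ≤ N v := by rw [hN v, hN z]; omega
  have c1 : (N1 z : ℝ) + 3 ≤ (N1 v : ℝ) := by exact_mod_cast hN1le
  have c2 : (N z : ℝ) + 5 ≤ (N v : ℝ) := by exact_mod_cast hNle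
  have m1 := mul_le_mul_of_nonneg_left c1 hα
  have m2 := mul_le_mul_of_nonneg_left c2 hβ
  nlinarith [m1, m2]
end

section
/- In the Random Edge graph setting, let w1, w2, w3 be the three (necessarily lower) neighbors of the maximum vertex v_max. Then N1(w_i) ≤ n−3 for each i, and N(w1) + N(w2) + N(w3) ≤ 6n − 21. Consequently, if E(w_i) ≤ (46/87)·N1(w_i) + (42/87)·N(w_i) for each i = 1, 2, 3, then E(v_max) = 1 + (1/3)(E(w1)+E(w2)+E(w3)) ≤ (130/87)·n − 115/29. -/
open Finset

theorem max_vertex_step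
    (n : ℕ) (hn : 4 ≤ n)
    (V : Type) [Fintype V] [LinearOrder V]
    (hcard : Fintype.card V = 2 * n - 4)
    (vmin vmax : V)
    (hvmin : ∀ v : V, vmin ≤ v) (hvmax : ∀ v : V, v ≤ vmax)
    (G : SimpleGraph V) [DecidableRel G.Adj]
    (hreg : ∀ v : V, (G.neighborFinset v).card = 3)
    (low : V → Finset V)
    (hlow : ∀ v : V, low v = (G.neighborFinset v).filter (fun w => w < v))
    (d : V → ℕ) (hd : ∀ v : V, d v = (low v).card)
    (hlower : ∀ v : V, v ≠ vmin → 1 ≤ d v)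
    (hupper : ∀ v : V, v ≠ vmax → ∃ u : V, G.Adj v u ∧ v < u)
    (E : V → ℝ) (hE0 : E vmin = 0)
    (hE : ∀ v : V, v ≠ vmin → E v = 1 + (1 / (d v : ℝ)) * ∑ w ∈ low v, E w)
    (N1 N2 N : V → ℕ)
    (hN1 : ∀ v : V, N1 v = (Finset.univ.filter (fun w => w ≤ v ∧ d w = 1)).card)
    (hN2 : ∀ v : V, N2 v = (Finset.univ.filter (fun w => w ≤ v ∧ d w = 2)).card)
    (hN : ∀ v : V, N v = N1 v + N2 v)
    (w1 w2 w3 : V)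
    (hnbrs : G.neighborFinset vmax = {w1, w2, w3})
    (h12 : w1 ≠ w2) (h13 : w1 ≠ w3) (h23 : w2 ≠ w3) :
    N1 w1 ≤ n - 3 ∧ N1 w2 ≤ n - 3 ∧ N1 w3 ≤ n - 3 ∧
    N w1 + N w2 + N w3 ≤ 6 * n - 21 ∧
    ((∀ w ∈ ({w1, w2, w3} : Finset V),
        E w ≤ (46/87) * (N1 w : ℝ) + (42/87) * (N w : ℝ)) →
      E vmax = 1 + (1/3) * (E w1 + E w2 + E w3) ∧
      E vmax ≤ (130/87) * (n : ℝ) - 115/29) := by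
  classical
  -- vmin ≠ vmax
  have hminmax : vmin ≠ vmax := by
    intro h
    obtain ⟨a, b, hab⟩ := Fintype.exists_pair_of_one_lt_card
      (by omega : 1 < Fintype.card V)
    exact hab (le_antisymm (le_trans (hvmax a) (h ▸ hvmin b))
      (le_trans (hvmax b) (h ▸ hvmin a)))
  -- low vmax is all of the neighbors
  have hlowmax : low vmax = G.neighborFinset vmax := by
    rw [hlow]
    apply Finset.filter_true_of_mem
    intro w hw
    exact lt_of_le_of_ne (hvmax w)
      (G.ne_of_adj ((G.mem_neighborFinset vmax w).mp hw)).symm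
  have hdmax : d vmax = 3 := by rw [hd, hlowmax, hreg]
  have hdmin : d vmin = 0 := by
    rw [hd, hlow, Finset.card_eq_zero, Finset.filter_eq_empty_iff]
    intro w _
    exact not_lt.2 (hvmin w)
  have hd12 : ∀ v : V, v ≠ vmin → v ≠ vmax → d v = 1 ∨ d v = 2 := by
    intro v hv1 hv2
    have h1 := hlower v hv1
    obtain ⟨u, hadj, hu⟩ := hupper v hv2
    have hss : low v ⊂ G.neighborFinset v := by
      rw [hlow]
      exact Finset.filter_ssubset.2
        ⟨u, (G.mem_neighborFinset v u).mpr hadj, not_lt.2 hu.le⟩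
    have hlt := Finset.card_lt_card hss
    rw [hreg] at hlt
    have hdv := hd v
    omega
  -- edge counting: ∑ d v = 3n - 6
  set A : Finset (V × V) :=
    (univ ×ˢ univ).filter (fun p => G.Adj p.1 p.2 ∧ p.2 < p.1) with hA
  set B : Finset (V × V) :=
    (univ ×ˢ univ).filter (fun p => G.Adj p.1 p.2 ∧ p.1 < p.2) with hB
  have hAcard : A.card = ∑ v : V, (low v).card := by
    rw [hA, Finset.card_filter, Finset.sum_product]
    apply Finset.sum_congr rfl
    intro v _
    rw [hlow, SimpleGraph.neighborFinset_eq_filter, Finset.filter_filter,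
      Finset.card_filter]
  have hBcard : B.card
      = ∑ v : V, ((G.neighborFinset v).filter (fun w => v < w)).card := by
    rw [hB, Finset.card_filter, Finset.sum_product]
    apply Finset.sum_congr rfl
    intro v _
    rw [SimpleGraph.neighborFinset_eq_filter, Finset.filter_filter,
      Finset.card_filter]
  have hAB : A.card = B.card := by
    apply Finset.card_bij (fun p _ => Prod.swap p)
    · intro p hp
      simp only [hA, hB, Finset.mem_filter, Finset.mem_product, Finset.mem_univ,
        true_and, Prod.fst_swap, Prod.snd_swap] at *
      exact ⟨hp.1.symm, hp.2⟩
    · intro p _ q _ h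
      exact Prod.swap_injective h
    · intro p hp
      refine ⟨p.swap, ?_, Prod.swap_swap p⟩
      simp only [hA, hB, Finset.mem_filter, Finset.mem_product, Finset.mem_univ,
        true_and, Prod.fst_swap, Prod.snd_swap] at *
      exact ⟨hp.1.symm, hp.2⟩
  have hsplit : ∀ v : V,
      (low v).card + ((G.neighborFinset v).filter (fun w => v < w)).card = 3 := by
    intro v
    rw [hlow]
    have h := Finset.card_filter_add_card_filter_not
      (s := G.neighborFinset v) (p := fun w => w < v)
    rw [hreg] at h
    have heq : (G.neighborFinset v).filter (fun w => v < w)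
        = (G.neighborFinset v).filter (fun a => ¬ a < v) := by
      apply Finset.filter_congr
      intro w hw
      have hne : v ≠ w := G.ne_of_adj ((G.mem_neighborFinset v w).mp hw)
      simp only [not_lt]
      exact ⟨fun h' => h'.le, fun h' => lt_of_le_of_ne h' hne⟩
    rw [heq]
    exact h
  have hsumd : ∑ v : V, d v = 3 * n - 6 := by
    have h1 : ∑ v : V, ((low v).card
        + ((G.neighborFinset v).filter (fun w => v < w)).card) = 3 * (2 * n - 4) := by
      rw [Finset.sum_congr rfl (fun v _ => hsplit v), Finset.sum_const,
        Finset.card_univ, hcard, smul_eq_mul, Nat.mul_comm]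
    rw [Finset.sum_add_distrib] at h1
    have h2 : ∑ v : V, d v = ∑ v : V, (low v).card :=
      Finset.sum_congr rfl (fun v _ => hd v)
    omega
  -- the classes of 1- and 2-vertices
  set S1 : Finset V := univ.filter (fun v => d v = 1) with hS1
  set S2 : Finset V := univ.filter (fun v => d v = 2) with hS2
  set rest : Finset V := univ.filter (fun v => v ≠ vmin ∧ v ≠ vmax) with hrestdef
  have hrestcard : rest.card = 2 * n - 6 := by
    have he : rest = univ \ {vmin, vmax} := by
      ext v
      simp [hrestdef, not_or]
    rw [he, Finset.card_sdiff_of_subset (Finset.subset_univ _), Finset.card_univ, hcard,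
      Finset.card_insert_of_notMem (by simpa using hminmax),
      Finset.card_singleton]
    omega
  have hrestsum : ∑ v ∈ rest, d v = 3 * n - 9 := by
    have h := Finset.sum_filter_add_sum_filter_not univ
      (fun v => v ≠ vmin ∧ v ≠ vmax) d
    have hnot : univ.filter (fun v => ¬(v ≠ vmin ∧ v ≠ vmax)) = {vmin, vmax} := by
      ext v
      simp only [Finset.mem_filter, Finset.mem_univ, true_and, not_and_or,
        not_ne_iff, Finset.mem_insert, Finset.mem_singleton]
    rw [hnot, Finset.sum_pair hminmax, hdmin, hdmax] at h
    rw [hsumd] at h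
    rw [← hrestdef] at h
    omega
  have hrestunion : rest = S1 ∪ S2 := by
    ext v
    simp only [hrestdef, hS1, hS2, Finset.mem_filter, Finset.mem_univ, true_and,
      Finset.mem_union]
    constructor
    · rintro ⟨h1, h2⟩
      exact hd12 v h1 h2
    · rintro (h | h) <;>
        exact ⟨fun he => by simp [he, hdmin] at h, fun he => by simp [he, hdmax] at h⟩
  have hdisj : Disjoint S1 S2 := by
    rw [Finset.disjoint_left]
    intro v hv1 hv2
    simp only [hS1, hS2, Finset.mem_filter] at hv1 hv2
    omega
  have hScards : S1.card + S2.card = 2 * n - 6 := by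
    rw [← Finset.card_union_of_disjoint hdisj, ← hrestunion, hrestcard]
  have hSsum : S1.card + 2 * S2.card = 3 * n - 9 := by
    have h := hrestsum
    rw [hrestunion, Finset.sum_union hdisj] at h
    have h1 : ∑ v ∈ S1, d v = S1.card := by
      rw [Finset.sum_congr rfl (fun v hv => by
        simp only [hS1, Finset.mem_filter] at hv; exact hv.2), Finset.sum_const,
        smul_eq_mul, Nat.mul_one]
    have h2 : ∑ v ∈ S2, d v = 2 * S2.card := by
      rw [Finset.sum_congr rfl (fun v hv => by
        simp only [hS2, Finset.mem_filter] at hv; exact hv.2), Finset.sum_const,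
        smul_eq_mul, Nat.mul_comm]
    omega
  have hS1card : S1.card = n - 3 := by omega
  -- N1 bound
  have hN1bound : ∀ w : V, N1 w ≤ n - 3 := by
    intro w
    rw [hN1, ← hS1card]
    apply Finset.card_le_card
    intro v hv
    simp only [Finset.mem_filter, Finset.mem_univ, true_and, hS1] at *
    exact hv.2
  -- N as a single filter
  have hNT : ∀ w : V, N w
      = (univ.filter (fun v => v ≤ w ∧ (d v = 1 ∨ d v = 2))).card := by
    intro w
    rw [hN, hN1, hN2, ← Finset.card_union_of_disjoint (by
      rw [Finset.disjoint_left]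
      intro v hv1 hv2
      simp only [Finset.mem_filter] at hv1 hv2
      omega)]
    congr 1
    ext v
    simp only [Finset.mem_union, Finset.mem_filter, Finset.mem_univ, true_and]
    tauto
  have hNle : ∀ w : V, N w ≤ 2 * n - 6 := by
    intro w
    rw [hNT, ← hrestcard]
    apply Finset.card_le_card
    intro v hv
    simp only [Finset.mem_filter, Finset.mem_univ, true_and, hrestdef] at *
    rcases hv.2 with h | h <;>
      exact ⟨fun he => by simp [he, hdmin] at h, fun he => by simp [he, hdmax] at h⟩
  have hstep : ∀ a b : V, a < b → b ≠ vmax → N a + 1 ≤ N b := by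
    intro a b hab hb
    rw [hNT a, hNT b]
    have hbmem : b ∈ univ.filter (fun v => v ≤ b ∧ (d v = 1 ∨ d v = 2)) := by
      simp only [Finset.mem_filter, Finset.mem_univ, true_and, le_refl, true_and]
      exact hd12 b (fun he => absurd (he ▸ hab) (not_lt.2 (hvmin a))) hb
    have hbnot : b ∉ univ.filter (fun v => v ≤ a ∧ (d v = 1 ∨ d v = 2)) := by
      simp only [Finset.mem_filter, Finset.mem_univ, true_and, not_and]
      intro h
      exact absurd h (not_le.2 hab)
    have hsub : univ.filter (fun v => v ≤ a ∧ (d v = 1 ∨ d v = 2))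
        ⊆ univ.filter (fun v => v ≤ b ∧ (d v = 1 ∨ d v = 2)) := by
      intro v hv
      simp only [Finset.mem_filter, Finset.mem_univ, true_and] at *
      exact ⟨hv.1.trans hab.le, hv.2⟩
    exact Finset.card_lt_card
      ((Finset.ssubset_iff_of_subset hsub).2 ⟨b, hbmem, hbnot⟩)
  have hkey : ∀ a b c : V, a < b → b < c → c ≠ vmax →
      N a + N b + N c ≤ 6 * n - 21 := by
    intro a b c hab hbc hc
    have h1 := hstep b c hbc hc
    have h2 := hstep a b hab (fun h => absurd (h ▸ hbc) (not_lt.2 (hvmax c)))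
    have h3 := hNle c
    omega
  -- the wᵢ are below vmax
  have hwmem : ∀ w ∈ ({w1, w2, w3} : Finset V), w ≠ vmax := by
    intro w hw
    have : w ∈ G.neighborFinset vmax := by rw [hnbrs]; exact hw
    exact (G.ne_of_adj ((G.mem_neighborFinset vmax w).mp this)).symm
  have hw1max : w1 ≠ vmax := hwmem w1 (by simp)
  have hw2max : w2 ≠ vmax := hwmem w2 (by simp)
  have hw3max : w3 ≠ vmax := hwmem w3 (by simp)
  have hNsum : N w1 + N w2 + N w3 ≤ 6 * n - 21 := by
    rcases h12.lt_or_gt with a | a <;> rcases h13.lt_or_gt with b | b <;>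
      rcases h23.lt_or_gt with c | c
    · have := hkey w1 w2 w3 a c hw3max; omega
    · have := hkey w1 w3 w2 b c hw2max; omega
    · exact absurd b (asymm (a.trans c))
    · have := hkey w3 w1 w2 b a hw2max; omega
    · have := hkey w2 w1 w3 a b hw3max; omega
    · exact absurd a (asymm (b.trans c))
    · have := hkey w2 w3 w1 c b hw1max; omega
    · have := hkey w3 w2 w1 c a hw1max; omega
  refine ⟨hN1bound w1, hN1bound w2, hN1bound w3, hNsum, ?_⟩
  intro hEbound
  have hEmax : E vmax = 1 + (1/3) * (E w1 + E w2 + E w3) := by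
    rw [hE vmax (Ne.symm hminmax), hdmax, hlowmax, hnbrs,
      Finset.sum_insert (by simp [h12, h13]),
      Finset.sum_insert (by simp [h23]), Finset.sum_singleton]
    norm_num
    ring
  refine ⟨hEmax, ?_⟩
  have hb1 := hEbound w1 (by simp)
  have hb2 := hEbound w2 (by simp)
  have hb3 := hEbound w3 (by simp)
  have hc1 : (N1 w1 : ℝ) ≤ (n : ℝ) - 3 := by
    have h := hN1bound w1
    have : N1 w1 + 3 ≤ n := by omega
    have := (Nat.cast_le (α := ℝ)).2 this
    push_cast at this
    linarith
  have hc2 : (N1 w2 : ℝ) ≤ (n : ℝ) - 3 := by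
    have h := hN1bound w2
    have : N1 w2 + 3 ≤ n := by omega
    have := (Nat.cast_le (α := ℝ)).2 this
    push_cast at this
    linarith
  have hc3 : (N1 w3 : ℝ) ≤ (n : ℝ) - 3 := by
    have h := hN1bound w3
    have : N1 w3 + 3 ≤ n := by omega
    have := (Nat.cast_le (α := ℝ)).2 this
    push_cast at this
    linarith
  have hcN : (N w1 : ℝ) + (N w2 : ℝ) + (N w3 : ℝ) ≤ 6 * (n : ℝ) - 21 := by
    have : N w1 + N w2 + N w3 + 21 ≤ 6 * n := by omega
    have := (Nat.cast_le (α := ℝ)).2 this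
    push_cast at this
    linarith
  rw [hEmax]
  linarith
end
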